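/- arXiv:2208.13291 — 3 statements merged into one kernel-verified Lean document; each statement's English description precedes it below -/
import Mathlib

section
/- A basis is Δ-(λ, RPSLC) if and only if ‖x‖ ≤ Δ‖x − P_A(x) + 1_{εB}‖ for all x with ‖x‖_∞ ≤ 1, all signs ε, and all finite sets A, B ⊂ ℕ satisfying (λ−1)s(A) + |A| ≤ |B|, B disjoint from supp(x − P_A(x)), B < A, and x − P_A(x) surrounds A. -/
open Finset Filter

noncomputable section

variable {X : Type*} [NormedAddCommGroup X] [NormedSpace ℝ X]

/-- Projection `P_A x = ∑_{n ∈ A} e_n^*(x) e_n`. -/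
def proj (f : ℕ → X →L[ℝ] ℝ) (e : ℕ → X) (A : Finset ℕ) (x : X) : X :=
  ∑ n ∈ A, f n x • e n

/-- `Λ` is a greedy set of `x`. -/
def GreedySet (f : ℕ → X →L[ℝ] ℝ) (x : X) (Λ : Finset ℕ) : Prop :=
  ∀ n ∈ Λ, ∀ m, m ∉ Λ → |f m x| ≤ |f n x|

/-- A (biorthogonal, norm-bounded, fundamental) basis system. -/
structure BasisSystem (f : ℕ → X →L[ℝ] ℝ) (e : ℕ → X) : Prop where
  biorth : ∀ n m, f n (e m) = if n = m then (1 : ℝ) else 0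
  dense : Dense (Submodule.span ℝ (Set.range e) : Set X)
  bounded : ∃ c₁ c₂ : ℝ, 0 < c₁ ∧ ∀ n, c₁ ≤ ‖e n‖ ∧ ‖e n‖ ≤ c₂ ∧ ‖f n‖ ≤ c₂

/-- `σ̌^Λ_m(x)`: inf of `‖x - P_I x‖` over `I = ∅` or intervals `I` with
`Λ ≤ max I` and `|I| ≤ m`. -/
def checkSigma (f : ℕ → X →L[ℝ] ℝ) (e : ℕ → X) (Λ : Finset ℕ) (m : ℕ) (x : X) : ℝ :=
  sInf {r : ℝ | ∃ I : Finset ℕ,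
    (I = ∅ ∨ ∃ a b : ℕ, a ≤ b ∧ I = Finset.Icc a b ∧ ∀ n ∈ Λ, n ≤ b) ∧
    I.card ≤ m ∧ r = ‖x - proj f e I x‖}

/-- `σ̂^Λ_m(x)`: inf of `‖x - P_I x‖` over `I = ∅` or intervals `I` with
`min I ≤ Λ` and `|I| ≤ m`. -/
def hatSigma (f : ℕ → X →L[ℝ] ℝ) (e : ℕ → X) (Λ : Finset ℕ) (m : ℕ) (x : X) : ℝ :=
  sInf {r : ℝ | ∃ I : Finset ℕ,
    (I = ∅ ∨ ∃ a b : ℕ, a ≤ b ∧ I = Finset.Icc a b ∧ ∀ n ∈ Λ, a ≤ n) ∧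
    I.card ≤ m ∧ r = ‖x - proj f e I x‖}

/-- `σ̃^{R,Λ}_m(x)`: inf of `‖x - P_A x‖` over `|A| ≤ m`, `A > Λ`. -/
def revSigma (f : ℕ → X →L[ℝ] ℝ) (e : ℕ → X) (Λ : Finset ℕ) (m : ℕ) (x : X) : ℝ :=
  sInf {r : ℝ | ∃ A : Finset ℕ, A.card ≤ m ∧ (∀ n ∈ Λ, ∀ a ∈ A, n < a) ∧
    r = ‖x - proj f e A x‖}

/-- Reverse partially greedy with constant `C`. -/
def RPG (f : ℕ → X →L[ℝ] ℝ) (e : ℕ → X) (C : ℝ) : Prop :=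
  ∀ (x : X) (m : ℕ) (Λ : Finset ℕ), Λ.card = m → GreedySet f x Λ →
    ‖x - proj f e Λ x‖ ≤ C * revSigma f e Λ m x

/-- `(λ, RPGII)` with constant `C`. -/
def RPGII (f : ℕ → X →L[ℝ] ℝ) (e : ℕ → X) (l C : ℝ) : Prop :=
  ∀ (x : X) (m : ℕ) (Λ : Finset ℕ), Λ.card = ⌈l * (m : ℝ)⌉₊ → GreedySet f x Λ →
    ‖x - proj f e Λ x‖ ≤ C * checkSigma f e Λ m x

/-- Quasi-greedy with constant `C`. -/
def QG (f : ℕ → X →L[ℝ] ℝ) (e : ℕ → X) (C : ℝ) : Prop :=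
  ∀ (x : X) (Λ : Finset ℕ), GreedySet f x Λ → ‖proj f e Λ x‖ ≤ C * ‖x‖

/-- Suppression quasi-greedy with constant `C`. -/
def SuppQG (f : ℕ → X →L[ℝ] ℝ) (e : ℕ → X) (C : ℝ) : Prop :=
  ∀ (x : X) (Λ : Finset ℕ), GreedySet f x Λ → ‖x - proj f e Λ x‖ ≤ C * ‖x‖

/-- Reverse conservative with constant `C`. -/
def RevConservative (e : ℕ → X) (C : ℝ) : Prop :=
  ∀ A B : Finset ℕ, (∀ b ∈ B, ∀ a ∈ A, b < a) → A.card ≤ B.card →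
    ‖∑ n ∈ A, e n‖ ≤ C * ‖∑ n ∈ B, e n‖

/-- `s(A) = max A - min A + 1` (and `s(∅) = 0`). -/
def spread (A : Finset ℕ) : ℕ :=
  if h : A.Nonempty then A.max' h - A.min' h + 1 else 0

/-- `(λ, reverse conservative of type II)` with constant `C`. -/
def RevConsII (e : ℕ → X) (l C : ℝ) : Prop :=
  ∀ A B : Finset ℕ, (l - 1) * spread A + (A.card : ℝ) ≤ (B.card : ℝ) →
    (∀ b ∈ B, ∀ a ∈ A, b < a) → ‖∑ n ∈ A, e n‖ ≤ C * ‖∑ n ∈ B, e n‖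

/-- `x` surrounds `A`: `supp x ∩ [min A, max A] = ∅` (vacuous for `A = ∅`). -/
def Surrounds (f : ℕ → X →L[ℝ] ℝ) (x : X) (A : Finset ℕ) : Prop :=
  ∀ a ∈ A, ∀ b ∈ A, ∀ n, a ≤ n → n ≤ b → f n x = 0

/-- `(λ, RPSLC)` with constant `Δ`. -/
def RPSLC (f : ℕ → X →L[ℝ] ℝ) (e : ℕ → X) (l Δ : ℝ) : Prop :=
  ∀ x : X, (∀ n, |f n x| ≤ 1) →
    ∀ ε δ : ℕ → ℝ, (∀ n, |ε n| = 1) → (∀ n, |δ n| = 1) →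
    ∀ A B : Finset ℕ, (l - 1) * spread A + (A.card : ℝ) ≤ (B.card : ℝ) →
    (∀ n ∈ B, f n x = 0) → (∀ b ∈ B, ∀ a ∈ A, b < a) → Surrounds f x A →
    ‖x + ∑ n ∈ A, ε n • e n‖ ≤ Δ * ‖x + ∑ n ∈ B, δ n • e n‖

lemma convex_signs (e : ℕ → X) (K : ℝ) (A : Finset ℕ) (a : ℕ → ℝ)
    (ha : ∀ n ∈ A, |a n| ≤ 1) :
    ∀ y : X, (∀ ε : ℕ → ℝ, (∀ n, |ε n| = 1) → ‖y + ∑ n ∈ A, ε n • e n‖ ≤ K) →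
    ‖y + ∑ n ∈ A, a n • e n‖ ≤ K := by
  induction A using Finset.induction_on with
  | empty =>
      intro y h
      simpa using h (fun _ => 1) (fun _ => by simp)
  | @insert m A hm IH =>
      intro y h
      have ham : |a m| ≤ 1 := ha m (Finset.mem_insert_self m A)
      have ha' : ∀ n ∈ A, |a n| ≤ 1 := fun n hn => ha n (Finset.mem_insert_of_mem hn)
      have key : ∀ ε : ℕ → ℝ, (∀ n, |ε n| = 1) →
          ‖(y + a m • e m) + ∑ n ∈ A, ε n • e n‖ ≤ K := by
        intro ε hε
        set t : ℝ := (a m + 1) / 2 with ht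
        have ht0 : 0 ≤ t := by
          have := abs_le.1 ham
          simp only [ht]; linarith [this.1]
        have ht1 : t ≤ 1 := by
          have := abs_le.1 ham
          simp only [ht]; linarith [this.2]
        have hsum : ∀ c : ℝ, ∑ n ∈ insert m A, Function.update ε m c n • e n
            = c • e m + ∑ n ∈ A, ε n • e n := by
          intro c
          rw [Finset.sum_insert hm, Function.update_self]
          congr 1
          apply Finset.sum_congr rfl
          intro n hn
          rw [Function.update_of_ne (by rintro rfl; exact hm hn)]
        have hεc : ∀ c : ℝ, |c| = 1 → ∀ n, |Function.update ε m c n| = 1 := by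
          intro c hc n
          rcases eq_or_ne n m with rfl | hne
          · simpa using hc
          · rw [Function.update_of_ne hne]; exact hε n
        have e1 := h (Function.update ε m 1) (hεc 1 (by norm_num))
        have e2 := h (Function.update ε m (-1)) (hεc (-1) (by norm_num))
        rw [hsum] at e1 e2
        have hid : (y + a m • e m) + ∑ n ∈ A, ε n • e n
            = t • (y + (1 : ℝ) • e m + ∑ n ∈ A, ε n • e n)
              + (1 - t) • (y + (-1 : ℝ) • e m + ∑ n ∈ A, ε n • e n) := by
          have h2t : (2 * t - 1) = a m := by simp only [ht]; ring
          rw [smul_add, smul_add, smul_add, smul_add, smul_smul, smul_smul]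
          rw [← h2t]
          module
        calc ‖(y + a m • e m) + ∑ n ∈ A, ε n • e n‖
            ≤ t * ‖y + (1 : ℝ) • e m + ∑ n ∈ A, ε n • e n‖
              + (1 - t) * ‖y + (-1 : ℝ) • e m + ∑ n ∈ A, ε n • e n‖ := by
              rw [hid]
              refine (norm_add_le _ _).trans ?_
              rw [norm_smul, norm_smul, Real.norm_eq_abs, Real.norm_eq_abs,
                abs_of_nonneg ht0, abs_of_nonneg (by linarith : (0:ℝ) ≤ 1 - t)]
          _ ≤ t * K + (1 - t) * K := by
              have h1 : ‖y + (1 : ℝ) • e m + ∑ n ∈ A, ε n • e n‖ ≤ K := by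
                refine le_trans (le_of_eq ?_) e1; rw [add_assoc]
              have h2 : ‖y + (-1 : ℝ) • e m + ∑ n ∈ A, ε n • e n‖ ≤ K := by
                refine le_trans (le_of_eq ?_) e2; rw [add_assoc]
              have := mul_le_mul_of_nonneg_left h1 ht0
              have := mul_le_mul_of_nonneg_left h2 (by linarith : (0:ℝ) ≤ 1 - t)
              nlinarith
          _ = K := by ring
      have := IH ha' (y + a m • e m) key
      refine le_trans (le_of_eq ?_) this
      rw [Finset.sum_insert hm]
      abel_nf

lemma f_proj (f : ℕ → X →L[ℝ] ℝ) (e : ℕ → X)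
    (hb : ∀ n m, f n (e m) = if n = m then (1 : ℝ) else 0)
    (A : Finset ℕ) (x : X) (n : ℕ) :
    f n (proj f e A x) = if n ∈ A then f n x else 0 := by
  unfold proj
  rw [map_sum]
  simp only [map_smul, hb, smul_eq_mul]
  rw [Finset.sum_congr rfl (fun m _ => by rw [mul_ite, mul_one, mul_zero])]
  simp [Finset.sum_ite_eq]

/-- reformulation of `(λ, RPSLC)`. -/
theorem stmt_5 (f : ℕ → X →L[ℝ] ℝ) (e : ℕ → X) (hb : BasisSystem f e)
    (l Δ : ℝ) (hl : 1 ≤ l) :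
    RPSLC f e l Δ ↔
      (∀ x : X, (∀ n, |f n x| ≤ 1) → ∀ ε : ℕ → ℝ, (∀ n, |ε n| = 1) →
        ∀ A B : Finset ℕ, (l - 1) * spread A + (A.card : ℝ) ≤ (B.card : ℝ) →
        (∀ n ∈ B, f n (x - proj f e A x) = 0) →
        (∀ b ∈ B, ∀ a ∈ A, b < a) → Surrounds f (x - proj f e A x) A →
        ‖x‖ ≤ Δ * ‖x - proj f e A x + ∑ n ∈ B, ε n • e n‖) := by
  constructor
  · intro H x hx ε hε A B hcard hB hBA hsur
    set y := x - proj f e A x with hy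
    have hfy : ∀ n, f n y = if n ∈ A then 0 else f n x := by
      intro n
      rw [hy, map_sub, f_proj f e hb.biorth]
      by_cases hn : n ∈ A <;> simp [hn]
    have hy1 : ∀ n, |f n y| ≤ 1 := by
      intro n; rw [hfy]
      by_cases hn : n ∈ A <;> simp [hn, hx n]
    have key : ∀ η : ℕ → ℝ, (∀ n, |η n| = 1) →
        ‖y + ∑ n ∈ A, η n • e n‖ ≤ Δ * ‖y + ∑ n ∈ B, ε n • e n‖ := by
      intro η hη
      exact H y hy1 η ε hη hε A B hcard hB hBA hsur
    have ha : ∀ n ∈ A, |f n x| ≤ 1 := fun n _ => hx n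
    have := convex_signs e (Δ * ‖y + ∑ n ∈ B, ε n • e n‖) A (fun n => f n x) ha y key
    refine le_trans (le_of_eq ?_) this
    congr 1
    rw [hy]; unfold proj; abel
  · intro H x hx ε δ hε hδ A B hcard hBx hBA hsur
    set x' := x + ∑ n ∈ A, ε n • e n with hx'
    have hA0 : ∀ n ∈ A, f n x = 0 := fun n hn => hsur n hn n hn n le_rfl le_rfl
    have hfx' : ∀ n, f n x' = f n x + (if n ∈ A then ε n else 0) := by
      intro n
      rw [hx', map_add, map_sum]
      congr 1
      simp only [map_smul, hb.biorth, smul_eq_mul]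
      rw [Finset.sum_congr rfl (fun m _ => by rw [mul_ite, mul_one, mul_zero])]
      simp [Finset.sum_ite_eq]
    have hx'1 : ∀ n, |f n x'| ≤ 1 := by
      intro n
      rw [hfx']
      by_cases hn : n ∈ A
      · simp [hn, hA0 n hn, le_of_eq (hε n)]
      · simp [hn, hx n]
    have hproj : proj f e A x' = ∑ n ∈ A, ε n • e n := by
      unfold proj
      refine Finset.sum_congr rfl fun n hn => ?_
      rw [hfx', if_pos hn, hA0 n hn, zero_add]
    have hsub : x' - proj f e A x' = x := by
      rw [hproj, hx']; abel
    have := H x' hx'1 δ hδ A B hcard (by rw [hsub]; exact hBx)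
      hBA (by rw [hsub]; exact hsur)
    rw [hsub] at this
    exact this
end
end

section
/- Let λ ≥ 1. If a basis is C_ℓ-suppression quasi-greedy and C_{λ,rp}-(λ, RPGII), then it is C_ℓC_{λ,rp}-(λ, RPSLC). -/
open Finset Filter

noncomputable section

variable {X : Type*} [NormedAddCommGroup X] [NormedSpace ℝ X]

/-! Let `I` be the smallest interval containing `A` and `u` the signs `ε` on `A`, `δ` off `A`.
Since `x` vanishes on `S = B ∪ I` and has coefficients of modulus at most `1`, every subset of `S`
is a greedy set of `y = x + ∑_{n ∈ S} u n e_n`. Choose `Λ ⊆ S \ A` with `|Λ| = ⌈λ s(A)⌉`; this is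
possible because `|S \ A| = |B| + s(A) - |A| ≥ λ s(A)`. Removing the greedy set `(S \ Λ) \ A`
from `y - P_Λ y` leaves `x + 1_{εA}`, so suppression quasi-greediness and `(λ, RPGII)` give
`‖x + 1_{εA}‖ ≤ C_ℓ ‖y - P_Λ y‖ ≤ C_ℓ C σ̌^Λ_{s(A)}(y) ≤ C_ℓ C ‖y - P_I y‖ = C_ℓ C ‖x + 1_{δB}‖`. -/

def intervalHull (A : Finset ℕ) : Finset ℕ :=
  if h : A.Nonempty then Icc (A.min' h) (A.max' h) else ∅

lemma subset_intervalHull (A : Finset ℕ) : A ⊆ intervalHull A := by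
  intro n hn
  rw [intervalHull, dif_pos ⟨n, hn⟩, mem_Icc]
  exact ⟨A.min'_le n hn, A.le_max' n hn⟩

lemma card_intervalHull (A : Finset ℕ) : (intervalHull A).card = spread A := by
  unfold intervalHull spread
  split_ifs with hA
  · have := A.min'_le _ (A.max'_mem hA)
    rw [Nat.card_Icc]; omega
  · rfl

lemma disjoint_intervalHull {A B : Finset ℕ} (hBA : ∀ b ∈ B, ∀ a ∈ A, b < a) :
    Disjoint B (intervalHull A) := by
  rw [disjoint_left]
  intro n hnB hnI
  unfold intervalHull at hnI
  split_ifs at hnI with hA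
  · exact absurd (mem_Icc.mp hnI).1 (not_le.mpr (hBA n hnB _ (A.min'_mem hA)))
  · simp at hnI

lemma intervalHull_eq_empty_or_eq_Icc {A B Λ : Finset ℕ} (hBA : ∀ b ∈ B, ∀ a ∈ A, b < a)
    (hΛ : Λ ⊆ B ∪ intervalHull A) :
    intervalHull A = ∅ ∨ ∃ a b : ℕ, a ≤ b ∧ intervalHull A = Icc a b ∧ ∀ n ∈ Λ, n ≤ b := by
  unfold intervalHull at hΛ ⊢
  split_ifs at hΛ ⊢ with hA
  · refine Or.inr ⟨_, _, A.min'_le _ (A.max'_mem hA), rfl, fun n hn => ?_⟩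
    rcases mem_union.mp (hΛ hn) with hnB | hnI
    · exact (hBA n hnB _ (A.max'_mem hA)).le
    · exact (mem_Icc.mp hnI).2
  · exact Or.inl rfl

lemma checkSigma_nonneg (f : ℕ → X →L[ℝ] ℝ) (e : ℕ → X) (Λ : Finset ℕ) (m : ℕ) (x : X) :
    0 ≤ checkSigma f e Λ m x :=
  Real.sInf_nonneg fun _ ⟨_, _, _, hr⟩ => hr ▸ norm_nonneg _

lemma checkSigma_le (f : ℕ → X →L[ℝ] ℝ) (e : ℕ → X) {Λ I : Finset ℕ} {m : ℕ} (x : X)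
    (hI : I = ∅ ∨ ∃ a b : ℕ, a ≤ b ∧ I = Icc a b ∧ ∀ n ∈ Λ, n ≤ b) (hm : I.card ≤ m) :
    checkSigma f e Λ m x ≤ ‖x - proj f e I x‖ :=
  csInf_le ⟨0, fun _ ⟨_, _, _, hr⟩ => hr ▸ norm_nonneg _⟩ ⟨I, hI, hm, rfl⟩

variable {f : ℕ → X →L[ℝ] ℝ} {e : ℕ → X}

lemma Surrounds.apply_eq_zero_of_mem_intervalHull {x : X} {A : Finset ℕ}
    (hsur : Surrounds f x A) {n : ℕ} (hn : n ∈ intervalHull A) : f n x = 0 := by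
  unfold intervalHull at hn
  split_ifs at hn with hA
  · exact hsur _ (A.min'_mem hA) _ (A.max'_mem hA) n (mem_Icc.mp hn).1 (mem_Icc.mp hn).2
  · simp at hn

namespace BasisSystem

variable (hb : BasisSystem f e)
include hb

lemma ne_zero (n : ℕ) : e n ≠ 0 := by
  intro h
  simpa [h] using hb.biorth n n

lemma apply_sum_smul (u : ℕ → ℝ) (S : Finset ℕ) (m : ℕ) :
    f m (∑ n ∈ S, u n • e n) = if m ∈ S then u m else 0 := by
  simp only [map_sum, map_smul, smul_eq_mul, hb.biorth, mul_ite, mul_one, mul_zero]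
  exact sum_ite_eq S m u

variable {x : X} {u : ℕ → ℝ} {S T : Finset ℕ}

lemma apply_add_sum_smul (hxS : ∀ n ∈ S, f n x = 0) (m : ℕ) :
    f m (x + ∑ n ∈ S, u n • e n) = if m ∈ S then u m else f m x := by
  rw [map_add, hb.apply_sum_smul]
  split_ifs with hm
  · rw [hxS m hm, zero_add]
  · rw [add_zero]

lemma sub_proj_add_sum (hxS : ∀ n ∈ S, f n x = 0) (hTS : T ⊆ S) :
    x + ∑ n ∈ S, u n • e n - proj f e T (x + ∑ n ∈ S, u n • e n)
      = x + ∑ n ∈ S \ T, u n • e n := by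
  have hproj : proj f e T (x + ∑ n ∈ S, u n • e n) = ∑ n ∈ T, u n • e n :=
    sum_congr rfl fun n hn => by rw [hb.apply_add_sum_smul hxS, if_pos (hTS hn)]
  rw [hproj, ← sum_sdiff hTS]
  abel

lemma greedySet_add_sum (hx : ∀ n, |f n x| ≤ 1) (hxS : ∀ n ∈ S, f n x = 0)
    (hu : ∀ n, |u n| = 1) (hTS : T ⊆ S) : GreedySet f (x + ∑ n ∈ S, u n • e n) T := by
  intro n hn m _
  rw [hb.apply_add_sum_smul hxS, hb.apply_add_sum_smul hxS, if_pos (hTS hn), hu n]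
  split_ifs
  exacts [(hu m).le, hx m]

end BasisSystem

section Constants

variable {x : X} (hx : x ≠ 0)
include hx

lemma SuppQG.one_le {Cl : ℝ} (hs : SuppQG f e Cl) : 1 ≤ Cl := by
  have h := hs x ∅ (by simp [GreedySet])
  simp only [proj, sum_empty, sub_zero] at h
  exact (le_mul_iff_one_le_left (norm_pos_iff.mpr hx)).mp h

lemma RPGII.nonneg {l C : ℝ} (h : RPGII f e l C) : 0 ≤ C := by
  have h0 := h x 0 ∅ (by simp) (by simp [GreedySet])
  simp only [proj, sum_empty, sub_zero] at h0
  by_contra! hC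
  have := mul_nonpos_of_nonpos_of_nonneg hC.le (checkSigma_nonneg f e ∅ 0 x)
  exact (norm_pos_iff.mpr hx).not_ge (h0.trans this)

end Constants

section Unimodular

variable {x : X} {u : ℕ → ℝ} {S : Finset ℕ} (hb : BasisSystem f e)
  (hx : ∀ n, |f n x| ≤ 1) (hxS : ∀ n ∈ S, f n x = 0) (hu : ∀ n, |u n| = 1)
include hb hx hxS hu

lemma SuppQG.norm_add_sum_le {Cl : ℝ} (hs : SuppQG f e Cl) {R : Finset ℕ} (hRS : R ⊆ S) :
    ‖x + ∑ n ∈ R, u n • e n‖ ≤ Cl * ‖x + ∑ n ∈ S, u n • e n‖ := by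
  have h := hs _ _ (hb.greedySet_add_sum hx hxS hu (sdiff_subset (s := S) (t := R)))
  rwa [hb.sub_proj_add_sum hxS sdiff_subset, Finset.sdiff_sdiff_eq_self hRS] at h

lemma RPGII.norm_add_sum_sdiff_le {l C : ℝ} (h : RPGII f e l C) {Λ : Finset ℕ} {m : ℕ}
    (hΛS : Λ ⊆ S) (hΛ : Λ.card = ⌈l * (m : ℝ)⌉₊) :
    ‖x + ∑ n ∈ S \ Λ, u n • e n‖ ≤ C * checkSigma f e Λ m (x + ∑ n ∈ S, u n • e n) := by
  have h' := h _ m Λ hΛ (hb.greedySet_add_sum hx hxS hu hΛS)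
  rwa [hb.sub_proj_add_sum hxS hΛS] at h'

end Unimodular

lemma exists_subset_sdiff_card_eq {l : ℝ} {A B : Finset ℕ}
    (hcard : (l - 1) * spread A + (A.card : ℝ) ≤ (B.card : ℝ))
    (hBA : ∀ b ∈ B, ∀ a ∈ A, b < a) :
    ∃ Λ ⊆ (B ∪ intervalHull A) \ A, Λ.card = ⌈l * (spread A : ℝ)⌉₊ := by
  apply exists_subset_card_eq
  have hunion := card_union_of_disjoint (disjoint_intervalHull hBA)
  have hsdiff := card_sdiff_add_card_eq_card
    ((subset_intervalHull A).trans (subset_union_right (s₁ := B)))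
  rw [card_intervalHull] at hunion
  rw [Nat.ceil_le]
  have := congrArg (Nat.cast : ℕ → ℝ) (hsdiff.trans hunion)
  push_cast at this
  linarith

theorem stmt_7_general (f : ℕ → X →L[ℝ] ℝ) (e : ℕ → X)
    (hb : BasisSystem f e) (l Cl C : ℝ) (hs : SuppQG f e Cl)
    (h : RPGII f e l C) : RPSLC f e l (Cl * C) := by
  intro x hx ε δ hε hδ A B hcard hBx hBA hsur
  set I := intervalHull A
  set S := B ∪ I
  set u : ℕ → ℝ := fun n => if n ∈ A then ε n else δ n
  have hu : ∀ n, |u n| = 1 := fun n => by dsimp only [u]; split_ifs <;> simp [hε, hδ]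
  have hxS : ∀ n ∈ S, f n x = 0 := fun n hn =>
    (mem_union.mp hn).elim (hBx n) hsur.apply_eq_zero_of_mem_intervalHull
  obtain ⟨Λ, hΛ, hΛcard⟩ := exists_subset_sdiff_card_eq hcard hBA
  have hΛS : Λ ⊆ S := hΛ.trans sdiff_subset
  have hAΛ : A ⊆ S \ Λ := fun a ha => mem_sdiff.mpr
    ⟨mem_union_right B (subset_intervalHull A ha), fun h => (mem_sdiff.mp (hΛ h)).2 ha⟩
  have hSI : S \ I = B := union_sdiff_cancel_right (disjoint_intervalHull hBA)
  have hσ := checkSigma_le f e (x + ∑ n ∈ S, u n • e n)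
    (intervalHull_eq_empty_or_eq_Icc hBA hΛS) (card_intervalHull A).le
  rw [hb.sub_proj_add_sum hxS subset_union_right, hSI] at hσ
  have hCl := hs.one_le (hb.ne_zero 0)
  have hC := h.nonneg (hb.ne_zero 0)
  calc ‖x + ∑ n ∈ A, ε n • e n‖ = ‖x + ∑ n ∈ A, u n • e n‖ := by
        congr 2; exact sum_congr rfl fun n hn => by simp [u, hn]
    _ ≤ Cl * ‖x + ∑ n ∈ S \ Λ, u n • e n‖ :=
        hs.norm_add_sum_le hb hx (fun n hn => hxS n (mem_sdiff.mp hn).1) hu hAΛ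
    _ ≤ Cl * (C * checkSigma f e Λ (spread A) (x + ∑ n ∈ S, u n • e n)) := by
        gcongr; exact h.norm_add_sum_sdiff_le hb hx hxS hu hΛS hΛcard
    _ ≤ Cl * (C * ‖x + ∑ n ∈ B, u n • e n‖) := by gcongr
    _ = Cl * C * ‖x + ∑ n ∈ B, δ n • e n‖ := by
        rw [← mul_assoc]; congr 3
        refine sum_congr rfl fun n hn => ?_
        have hnA : n ∉ A := fun ha => lt_irrefl n (hBA n hn n ha)
        simp [u, hnA]

/-- suppression quasi-greedy + `C`-(λ, RPGII) implies
`C_ℓ C`-(λ, RPSLC). -/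
theorem stmt_7 [CompleteSpace X] (f : ℕ → X →L[ℝ] ℝ) (e : ℕ → X)
    (hb : BasisSystem f e) (l Cl C : ℝ) (hl : 1 ≤ l) (hs : SuppQG f e Cl)
    (h : RPGII f e l C) : RPSLC f e l (Cl * C) :=
  stmt_7_general f e hb l Cl C hs h
end
end

section
/- Let λ ≥ 1 and let (e_n) be a quasi-greedy basis. Then (e_n) is (λ, reverse conservative of type II) if and only if it is (λ, RPSLC). Moreover, if the basis is C_q-quasi-greedy, C_ℓ-suppression quasi-greedy, and Δ_{λ,rc}-(λ, reverse conservative of type II), then it is (4C_q³Δ_{λ,rc} + C_ℓ)-(λ, RPSLC). -/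
open Finset Filter

noncomputable section

variable {X : Type*} [NormedAddCommGroup X] [NormedSpace ℝ X]

lemma coeff_sum (f : ℕ → X →L[ℝ] ℝ) (e : ℕ → X) (hb : BasisSystem f e)
    (c : ℕ → ℝ) (A : Finset ℕ) (m : ℕ) :
    f m (∑ n ∈ A, c n • e n) = if m ∈ A then c m else 0 := by
  rw [map_sum]
  have h : ∀ n ∈ A, f m (c n • e n) = if n = m then c n else 0 := by
    intro n _
    rw [map_smul, hb.biorth]
    by_cases h : m = n
    · subst h; simp
    · rw [if_neg h, if_neg (fun h' : n = m => h h'.symm)]; simp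
  rw [Finset.sum_congr rfl h, Finset.sum_ite_eq']

lemma proj_sum (f : ℕ → X →L[ℝ] ℝ) (e : ℕ → X) (hb : BasisSystem f e)
    (c : ℕ → ℝ) {A Λ : Finset ℕ} (hΛ : Λ ⊆ A) :
    proj f e Λ (∑ n ∈ A, c n • e n) = ∑ n ∈ Λ, c n • e n := by
  unfold proj
  refine Finset.sum_congr rfl fun n hn => ?_
  rw [coeff_sum f e hb, if_pos (hΛ hn)]

lemma sgn_proj (f : ℕ → X →L[ℝ] ℝ) (e : ℕ → X) (hb : BasisSystem f e)
    {Cq : ℝ} (hq : QG f e Cq) (c : ℕ → ℝ) {A Λ : Finset ℕ} (hΛ : Λ ⊆ A)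
    (hc : ∀ n ∈ A, |c n| = 1) :
    ‖∑ n ∈ Λ, c n • e n‖ ≤ Cq * ‖∑ n ∈ A, c n • e n‖ := by
  have hg : GreedySet f (∑ n ∈ A, c n • e n) Λ := by
    intro n hn m hm
    rw [coeff_sum f e hb, coeff_sum f e hb, if_pos (hΛ hn)]
    by_cases h : m ∈ A
    · rw [if_pos h, hc n (hΛ hn), hc m h]
    · rw [if_neg h, hc n (hΛ hn)]; simp
  have h := hq _ _ hg
  rwa [proj_sum f e hb c hΛ] at h

lemma ind_proj (f : ℕ → X →L[ℝ] ℝ) (e : ℕ → X) (hb : BasisSystem f e)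
    {Cq : ℝ} (hq : QG f e Cq) {A Λ : Finset ℕ} (hΛ : Λ ⊆ A) :
    ‖∑ n ∈ Λ, e n‖ ≤ Cq * ‖∑ n ∈ A, e n‖ := by
  have h := sgn_proj f e hb hq (fun _ => (1 : ℝ)) hΛ (by simp)
  simpa using h

lemma one_le_Cq (f : ℕ → X →L[ℝ] ℝ) (e : ℕ → X) (hb : BasisSystem f e)
    {Cq : ℝ} (hq : QG f e Cq) : 1 ≤ Cq := by
  obtain ⟨c₁, c₂, hc₁, hbd⟩ := hb.bounded
  have hg : GreedySet f (e 0) {0} := by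
    intro n hn m hm
    simp only [Finset.mem_singleton] at hn hm
    subst hn
    rw [hb.biorth, hb.biorth, if_pos rfl, if_neg hm]
    simp
  have h := hq (e 0) {0} hg
  have hp : proj f e {0} (e 0) = e 0 := by simp [proj, hb.biorth]
  rw [hp] at h
  have h0 : 0 < ‖e 0‖ := lt_of_lt_of_le hc₁ (hbd 0).1
  nlinarith

lemma rc_pos (f : ℕ → X →L[ℝ] ℝ) (e : ℕ → X) (hb : BasisSystem f e)
    {l Δrc : ℝ} (hl : 1 ≤ l) (hrc : RevConsII e l Δrc) : 0 < Δrc := by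
  obtain ⟨c₁, c₂, hc₁, hbd⟩ := hb.bounded
  set k := ⌈l⌉₊ with hk
  have hkl : l ≤ (k : ℝ) := Nat.le_ceil l
  have hs : spread ({k} : Finset ℕ) = 1 := by simp [spread]
  have h := hrc {k} (Finset.range k) ?_ ?_
  · have h1 : c₁ ≤ ‖∑ n ∈ ({k} : Finset ℕ), e n‖ := by
      rw [Finset.sum_singleton]; exact (hbd k).1
    have h2 : (0 : ℝ) ≤ ‖∑ n ∈ Finset.range k, e n‖ := norm_nonneg _
    nlinarith
  · rw [hs]
    push_cast
    simp only [Finset.card_singleton, Finset.card_range]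
    push_cast
    linarith
  · intro b hbmem a hamem
    rw [Finset.mem_singleton] at hamem
    subst hamem
    exact Finset.mem_range.mp hbmem

lemma main_rpslc (f : ℕ → X →L[ℝ] ℝ) (e : ℕ → X) (hb : BasisSystem f e)
    {l : ℝ} (hl : 1 ≤ l) (Cq Cl Δrc : ℝ) (hq : QG f e Cq) (hs : SuppQG f e Cl)
    (hrc : RevConsII e l Δrc) : RPSLC f e l (4 * Cq ^ 3 * Δrc + Cl) := by
  have hCq : 1 ≤ Cq := one_le_Cq f e hb hq
  have hΔ : 0 < Δrc := rc_pos f e hb hl hrc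
  intro x hx ε δ hε hδ A B hcard hBx hBA _
  set y := x + ∑ n ∈ B, δ n • e n with hy
  -- coefficients of y
  have hyc : ∀ n, f n y = f n x + (if n ∈ B then δ n else 0) := by
    intro n
    rw [hy, map_add, coeff_sum f e hb]
  -- B is a greedy set of y
  have hgB : GreedySet f y B := by
    intro n hn m hm
    rw [hyc, hyc, if_pos hn, if_neg hm, hBx n hn, zero_add, add_zero, hδ n]
    exact hx m
  have hprojB : proj f e B y = ∑ n ∈ B, δ n • e n := by
    unfold proj
    refine Finset.sum_congr rfl fun n hn => ?_
    rw [hyc, if_pos hn, hBx n hn, zero_add]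
  have h3 : ‖∑ n ∈ B, δ n • e n‖ ≤ Cq * ‖y‖ := by
    have h := hq y B hgB; rwa [hprojB] at h
  have h4 : ‖x‖ ≤ Cl * ‖y‖ := by
    have h := hs y B hgB
    rw [hprojB] at h
    rwa [hy, add_sub_cancel_right] at h
  -- sign values
  have hval : ∀ (c : ℕ → ℝ), (∀ n, |c n| = 1) → ∀ n, c n = 1 ∨ c n = -1 := by
    intro c hc n
    rcases abs_eq (by norm_num : (0:ℝ) ≤ 1) |>.mp (hc n) with h | h
    · exact Or.inl h
    · exact Or.inr h
  -- split of ε-sum over A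
  have hAsplit : ∑ n ∈ A, ε n • e n =
      (∑ n ∈ A.filter (fun n => 0 < ε n), e n) -
      (∑ n ∈ A.filter (fun n => ¬ 0 < ε n), e n) := by
    rw [← Finset.sum_filter_add_sum_filter_not A (fun n => 0 < ε n) (fun n => ε n • e n)]
    have h1 : ∑ n ∈ A.filter (fun n => 0 < ε n), ε n • e n
        = ∑ n ∈ A.filter (fun n => 0 < ε n), e n := by
      refine Finset.sum_congr rfl fun n hn => ?_
      rcases hval ε hε n with h | h
      · rw [h, one_smul]
      · exfalso
        have hp : 0 < ε n := (Finset.mem_filter.mp hn).2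
        rw [h] at hp; linarith
    have h2 : ∑ n ∈ A.filter (fun n => ¬ 0 < ε n), ε n • e n
        = -∑ n ∈ A.filter (fun n => ¬ 0 < ε n), e n := by
      rw [← Finset.sum_neg_distrib]
      refine Finset.sum_congr rfl fun n hn => ?_
      rcases hval ε hε n with h | h
      · exfalso
        have hp : ¬ 0 < ε n := (Finset.mem_filter.mp hn).2
        exact hp (by rw [h]; norm_num)
      · rw [h, neg_one_smul]
    rw [h1, h2]; abel
  have hAε : ‖∑ n ∈ A, ε n • e n‖ ≤ 2 * Cq * ‖∑ n ∈ A, e n‖ := by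
    rw [hAsplit]
    have p1 := ind_proj f e hb hq (Finset.filter_subset (fun n => 0 < ε n) A)
    have p2 := ind_proj f e hb hq (Finset.filter_subset (fun n => ¬ 0 < ε n) A)
    calc ‖_ - _‖ ≤ ‖∑ n ∈ A.filter (fun n => 0 < ε n), e n‖ +
        ‖∑ n ∈ A.filter (fun n => ¬ 0 < ε n), e n‖ := norm_sub_le _ _
      _ ≤ 2 * Cq * ‖∑ n ∈ A, e n‖ := by linarith
  -- indicator of B bounded by signed sum over B
  have hBind : ‖∑ n ∈ B, e n‖ ≤ 2 * Cq * ‖∑ n ∈ B, δ n • e n‖ := by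
    have hsplit : ∑ n ∈ B, e n =
        (∑ n ∈ B.filter (fun n => 0 < δ n), e n) +
        (∑ n ∈ B.filter (fun n => ¬ 0 < δ n), e n) :=
      (Finset.sum_filter_add_sum_filter_not B (fun n => 0 < δ n) (fun n => e n)).symm
    have q1 : ‖∑ n ∈ B.filter (fun n => 0 < δ n), e n‖ ≤ Cq * ‖∑ n ∈ B, δ n • e n‖ := by
      have h := sgn_proj f e hb hq δ (Finset.filter_subset (fun n => 0 < δ n) B)
        (fun n _ => hδ n)
      have heq : ∑ n ∈ B.filter (fun n => 0 < δ n), δ n • e n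
          = ∑ n ∈ B.filter (fun n => 0 < δ n), e n := by
        refine Finset.sum_congr rfl fun n hn => ?_
        rcases hval δ hδ n with h' | h'
        · rw [h', one_smul]
        · exfalso
          have hp : 0 < δ n := (Finset.mem_filter.mp hn).2
          rw [h'] at hp; linarith
      rwa [heq] at h
    have q2 : ‖∑ n ∈ B.filter (fun n => ¬ 0 < δ n), e n‖ ≤ Cq * ‖∑ n ∈ B, δ n • e n‖ := by
      have h := sgn_proj f e hb hq δ (Finset.filter_subset (fun n => ¬ 0 < δ n) B)
        (fun n _ => hδ n)
      have heq : ∑ n ∈ B.filter (fun n => ¬ 0 < δ n), δ n • e n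
          = -∑ n ∈ B.filter (fun n => ¬ 0 < δ n), e n := by
        rw [← Finset.sum_neg_distrib]
        refine Finset.sum_congr rfl fun n hn => ?_
        rcases hval δ hδ n with h' | h'
        · exfalso
          have hp : ¬ 0 < δ n := (Finset.mem_filter.mp hn).2
          exact hp (by rw [h']; norm_num)
        · rw [h', neg_one_smul]
      rw [heq, norm_neg] at h
      exact h
    calc ‖∑ n ∈ B, e n‖ ≤ ‖∑ n ∈ B.filter (fun n => 0 < δ n), e n‖ +
        ‖∑ n ∈ B.filter (fun n => ¬ 0 < δ n), e n‖ := by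
          rw [hsplit]; exact norm_add_le _ _
      _ ≤ 2 * Cq * ‖∑ n ∈ B, δ n • e n‖ := by linarith
  have hAB : ‖∑ n ∈ A, e n‖ ≤ Δrc * ‖∑ n ∈ B, e n‖ := hrc A B hcard hBA
  -- combine
  have c1 : (0 : ℝ) ≤ 2 * Cq := by linarith
  have c2 : (0 : ℝ) ≤ 2 * Cq * Δrc := by positivity
  have key : ‖∑ n ∈ A, ε n • e n‖ ≤ 4 * Cq ^ 3 * Δrc * ‖y‖ := by
    calc ‖∑ n ∈ A, ε n • e n‖ ≤ 2 * Cq * ‖∑ n ∈ A, e n‖ := hAε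
      _ ≤ 2 * Cq * (Δrc * ‖∑ n ∈ B, e n‖) := by
          exact mul_le_mul_of_nonneg_left hAB c1
      _ = 2 * Cq * Δrc * ‖∑ n ∈ B, e n‖ := by ring
      _ ≤ 2 * Cq * Δrc * (2 * Cq * ‖∑ n ∈ B, δ n • e n‖) :=
          mul_le_mul_of_nonneg_left hBind c2
      _ = 4 * Cq ^ 2 * Δrc * ‖∑ n ∈ B, δ n • e n‖ := by ring
      _ ≤ 4 * Cq ^ 2 * Δrc * (Cq * ‖y‖) := by
          refine mul_le_mul_of_nonneg_left h3 ?_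
          positivity
      _ = 4 * Cq ^ 3 * Δrc * ‖y‖ := by ring
  calc ‖x + ∑ n ∈ A, ε n • e n‖ ≤ ‖x‖ + ‖∑ n ∈ A, ε n • e n‖ := norm_add_le _ _
    _ ≤ Cl * ‖y‖ + 4 * Cq ^ 3 * Δrc * ‖y‖ := by linarith
    _ = (4 * Cq ^ 3 * Δrc + Cl) * ‖y‖ := by ring

/-- for a quasi-greedy basis, (λ, reverse conservative of type II)
iff (λ, RPSLC); moreover with the explicit constant `4C_q³Δ + C_ℓ`. -/
theorem stmt_10 [CompleteSpace X] (f : ℕ → X →L[ℝ] ℝ) (e : ℕ → X)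
    (hb : BasisSystem f e) (l : ℝ) (hl : 1 ≤ l) (hq : ∃ Cq : ℝ, QG f e Cq) :
    ((∃ C : ℝ, 0 < C ∧ RevConsII e l C) ↔ (∃ Δ : ℝ, 1 ≤ Δ ∧ RPSLC f e l Δ)) ∧
    (∀ Cq Cl Δrc : ℝ, QG f e Cq → SuppQG f e Cl → RevConsII e l Δrc →
      RPSLC f e l (4 * Cq ^ 3 * Δrc + Cl)) := by
  constructor
  · constructor
    · rintro ⟨C, hC, hrc⟩
      obtain ⟨Cq, hCq⟩ := hq
      have h1 : 1 ≤ Cq := one_le_Cq f e hb hCq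
      have hsq : SuppQG f e (1 + Cq) := by
        intro x Λ hg
        calc ‖x - proj f e Λ x‖ ≤ ‖x‖ + ‖proj f e Λ x‖ := norm_sub_le _ _
          _ ≤ (1 + Cq) * ‖x‖ := by
              have := hCq x Λ hg
              have := norm_nonneg x
              nlinarith
      refine ⟨4 * Cq ^ 3 * C + (1 + Cq), ?_, main_rpslc f e hb hl Cq (1 + Cq) C hCq hsq hrc⟩
      have hp : 0 < Cq ^ 3 * C := mul_pos (pow_pos (by linarith) 3) hC
      linarith
    · rintro ⟨Δ, hΔ, hrp⟩
      refine ⟨Δ, by linarith, ?_⟩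
      intro A B hcard hBA
      have h := hrp 0 (by simp) (fun _ => 1) (fun _ => 1) (by simp) (by simp)
        A B hcard (by simp) hBA (by intro a _ b _ n _ _; simp)
      simpa using h
  · intro Cq Cl Δrc hCq hsq hrc
    exact main_rpslc f e hb hl Cq Cl Δrc hCq hsq hrc
end
end
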